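/- arXiv:2605.21435 — 3 statements merged into one kernel-verified Lean document; each statement's English description precedes it below -/
import Mathlib

section
/- Let φ_A, φ_B : S₊^n → S₊^m be maps of the form φ_A(Σ) = AΣAᵀ, φ_B(Σ) = BΣBᵀ. The set Eq(φ_A, φ_B) = {Σ ∈ S₊^n : AΣAᵀ = BΣBᵀ}, together with the inclusion into S₊^n, is an equalizer in the category SDef: for any cone Z in SDef and any morphism φ_X : Z → S₊^n with φ_A ∘ φ_X = φ_B ∘ φ_X, there is a unique morphism u : Z → Eq(φ_A, φ_B) with i ∘ u = φ_X. -/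
open Matrix

/-- The set `Eq(φ_A, φ_B) = {S PSD | ASAᵀ = BSBᵀ}` with the inclusion is an
equalizer in SDef: any morphism `φ_X : Z → S₊^n` equalizing `φ_A` and `φ_B`
factors uniquely through it. -/
theorem sdef_equalizer {n m p : ℕ}
    (A B : Matrix (Fin m) (Fin n) ℝ)
    (Z : Set (Matrix (Fin p) (Fin p) ℝ)) (hZ : ∀ S ∈ Z, S.PosSemidef)
    (X : Matrix (Fin n) (Fin p) ℝ)
    (hX : ∀ S ∈ Z, A * (X * S * Xᵀ) * Aᵀ = B * (X * S * Xᵀ) * Bᵀ) :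
    ∃! u : Z → {S : Matrix (Fin n) (Fin n) ℝ // S.PosSemidef ∧ A * S * Aᵀ = B * S * Bᵀ},
      ∀ σ : Z, (u σ : Matrix (Fin n) (Fin n) ℝ) = X * (σ : Matrix (Fin p) (Fin p) ℝ) * Xᵀ := by
  refine ⟨fun σ => ⟨X * σ.1 * Xᵀ, ?_, hX σ σ.2⟩, fun _ => rfl,
    fun v hv => funext fun σ => Subtype.ext (hv σ)⟩
  simpa using (hZ σ σ.2).mul_mul_conjTranspose_same X
end

section
/- Let G be a connected graph and (G, C) a sheaf of covariances with invertible restriction maps. Decompose the covariance sheaf Laplacian into positive and negative parts L_C = L_C⁺ + L_C⁻ (following the decomposition of the coboundary into δ⁺ and δ⁻). Then the equalizer Eq(L_C⁺, L_C⁻) equals H⁰(G, C), i.e., a 0-cochain Σ of PSD matrices satisfies L_C⁺(Σ) = L_C⁻(Σ) if and only if F_{v◁e} Σ_v F_{v◁e}ᵀ = F_{u◁e} Σ_u F_{u◁e}ᵀ for every edge e = (v,u). -/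
/-!
Pairing `L_C⁺Σ - L_C⁻Σ` with `Σ` itself and cycling traces gives
`∑_v tr(Σ_v (L_C⁺Σ - L_C⁻Σ)_v) = ∑_e tr((δΣ)_e²)` with `(δΣ)_e = δ⁺Σ_e - δ⁻Σ_e`.
Since `Σ` is symmetric so is each `(δΣ)_e`, and `tr((δΣ)_e²)` is its squared Frobenius norm;
hence on the equalizer `δ⁺Σ = δ⁻Σ` on every edge. Conversely, if `δ⁺Σ = δ⁻Σ` then `L_C⁺Σ` and
`L_C⁻Σ` agree term by term.
-/

open Matrix

variable {V E : Type*} {d : ℕ}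

/-- Source of edge `e` under orientation `o` (endpoints `a e`, `b e`). -/
def srcO (a b : E → V) (o : E → Bool) (e : E) : V := if o e then a e else b e

/-- Target of edge `e` under orientation `o`. -/
def tgtO (a b : E → V) (o : E → Bool) (e : E) : V := if o e then b e else a e

/-- Positive part of the covariance coboundary for orientation `o`. -/
def deltaP (a b : E → V) (o : E → Bool) (F : E → V → Matrix (Fin d) (Fin d) ℝ)
    (S : V → Matrix (Fin d) (Fin d) ℝ) (e : E) : Matrix (Fin d) (Fin d) ℝ :=
  F e (srcO a b o e) * S (srcO a b o e) * (F e (srcO a b o e))ᵀ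

/-- Negative part of the covariance coboundary for orientation `o`. -/
def deltaM (a b : E → V) (o : E → Bool) (F : E → V → Matrix (Fin d) (Fin d) ℝ)
    (S : V → Matrix (Fin d) (Fin d) ℝ) (e : E) : Matrix (Fin d) (Fin d) ℝ :=
  F e (tgtO a b o e) * S (tgtO a b o e) * (F e (tgtO a b o e))ᵀ

/-- Positive part `L_C⁺` of the covariance sheaf Laplacian (the `(δ⁺)ᵀδ⁺ + (δ⁻)ᵀδ⁻`
terms) at node `v`, for orientation `o`. -/
def lapP [Fintype E] [DecidableEq V] (a b : E → V) (o : E → Bool)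
    (F : E → V → Matrix (Fin d) (Fin d) ℝ)
    (S : V → Matrix (Fin d) (Fin d) ℝ) (v : V) : Matrix (Fin d) (Fin d) ℝ :=
  ∑ e : E,
    ((if v = srcO a b o e then (F e v)ᵀ * deltaP a b o F S e * F e v else 0) +
     (if v = tgtO a b o e then (F e v)ᵀ * deltaM a b o F S e * F e v else 0))

/-- Negative part `L_C⁻` of the covariance sheaf Laplacian (the cross terms
`(δ⁺)ᵀδ⁻ + (δ⁻)ᵀδ⁺`) at node `v`, for orientation `o`. -/
def lapM [Fintype E] [DecidableEq V] (a b : E → V) (o : E → Bool)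
    (F : E → V → Matrix (Fin d) (Fin d) ℝ)
    (S : V → Matrix (Fin d) (Fin d) ℝ) (v : V) : Matrix (Fin d) (Fin d) ℝ :=
  ∑ e : E,
    ((if v = srcO a b o e then (F e v)ᵀ * deltaM a b o F S e * F e v else 0) +
     (if v = tgtO a b o e then (F e v)ᵀ * deltaP a b o F S e * F e v else 0))

theorem Matrix.trace_mul_transpose_mul_mul {m n R : Type*} [Fintype m] [Fintype n] [CommRing R]
    (S : Matrix n n R) (X : Matrix m m R) (F : Matrix m n R) :
    trace (S * (Fᵀ * X * F)) = trace (X * (F * S * Fᵀ)) := by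
  rw [← Matrix.mul_assoc, ← Matrix.mul_assoc, trace_mul_comm, ← Matrix.mul_assoc,
    ← Matrix.mul_assoc, trace_mul_comm]

/-- The covariance coboundary `(δΣ)_e = δ⁺Σ_e - δ⁻Σ_e` for orientation `o`. -/
def covCoboundary (a b : E → V) (o : E → Bool) (F : E → V → Matrix (Fin d) (Fin d) ℝ)
    (S : V → Matrix (Fin d) (Fin d) ℝ) (e : E) : Matrix (Fin d) (Fin d) ℝ :=
  deltaP a b o F S e - deltaM a b o F S e

section CovarianceSheaf

variable (a b : E → V) (o : E → Bool) (F : E → V → Matrix (Fin d) (Fin d) ℝ)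
  (S : V → Matrix (Fin d) (Fin d) ℝ)

theorem covCoboundary_eq_zero_iff (e : E) :
    covCoboundary a b o F S e = 0 ↔
      F e (a e) * S (a e) * (F e (a e))ᵀ = F e (b e) * S (b e) * (F e (b e))ᵀ := by
  rw [covCoboundary, sub_eq_zero, deltaP, deltaM, srcO, tgtO]
  cases o e
  · exact eq_comm
  · exact Iff.rfl

variable {S} in
theorem isHermitian_covCoboundary (hS : ∀ v, (S v).IsHermitian) (e : E) :
    (covCoboundary a b o F S e).IsHermitian := by
  simp only [covCoboundary, deltaP, deltaM, ← conjTranspose_eq_transpose_of_trivial]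
  exact (isHermitian_mul_mul_conjTranspose _ (hS _)).sub
    (isHermitian_mul_mul_conjTranspose _ (hS _))

variable [Fintype E] [DecidableEq V]

theorem lapP_sub_lapM (v : V) :
    lapP a b o F S v - lapM a b o F S v =
      ∑ e, ((if v = srcO a b o e then (F e v)ᵀ * covCoboundary a b o F S e * F e v else 0) -
        (if v = tgtO a b o e then (F e v)ᵀ * covCoboundary a b o F S e * F e v else 0)) := by
  rw [lapP, lapM, ← Finset.sum_sub_distrib]
  refine Finset.sum_congr rfl fun e _ => ?_
  simp only [covCoboundary, mul_sub, sub_mul]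
  split_ifs <;> abel

theorem sum_trace_mul_lapP_sub_lapM (T : Finset V) (hsrc : ∀ e, srcO a b o e ∈ T)
    (htgt : ∀ e, tgtO a b o e ∈ T) :
    ∑ v ∈ T, trace (S v * (lapP a b o F S v - lapM a b o F S v)) =
      ∑ e, trace (covCoboundary a b o F S e * covCoboundary a b o F S e) := by
  simp only [lapP_sub_lapM, Finset.mul_sum, trace_sum, mul_sub, mul_ite, mul_zero, trace_sub,
    apply_ite trace, trace_zero]
  rw [Finset.sum_comm]
  refine Finset.sum_congr rfl fun e _ => ?_
  rw [Finset.sum_sub_distrib, Finset.sum_ite_eq', Finset.sum_ite_eq', if_pos (hsrc e),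
    if_pos (htgt e), trace_mul_transpose_mul_mul, trace_mul_transpose_mul_mul, ← trace_sub,
    ← mul_sub]
  rfl

variable {S} in
theorem lapP_eq_lapM_iff_covCoboundary_eq_zero (hS : ∀ v, (S v).IsHermitian) :
    (∀ v, lapP a b o F S v = lapM a b o F S v) ↔ ∀ e, covCoboundary a b o F S e = 0 := by
  refine ⟨fun h e => ?_, fun h v => ?_⟩
  · set D := covCoboundary a b o F S
    have hsq : ∀ e, (D e)ᴴ * D e = D e * D e := fun e => by
      rw [(isHermitian_covCoboundary a b o F hS e).eq]
    have hsum : ∑ e, trace ((D e)ᴴ * D e) = 0 := by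
      rw [Finset.sum_congr rfl fun e _ => congrArg trace (hsq e),
        ← sum_trace_mul_lapP_sub_lapM a b o F S
          (Finset.univ.image (srcO a b o) ∪ Finset.univ.image (tgtO a b o)) (by simp) (by simp)]
      simp [h]
    rw [← trace_conjTranspose_mul_self_eq_zero_iff]
    exact (Finset.sum_eq_zero_iff_of_nonneg fun e _ =>
      (posSemidef_conjTranspose_mul_self (D e)).trace_nonneg).mp hsum e (Finset.mem_univ e)
  · rw [← sub_eq_zero, lapP_sub_lapM]
    simp [h]

end CovarianceSheaf

theorem lap_equalizer_eq_H0_general [Fintype E] [DecidableEq V]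
    (a b : E → V)
    (F : E → V → Matrix (Fin d) (Fin d) ℝ)
    (S : V → Matrix (Fin d) (Fin d) ℝ) (hS : ∀ v, (S v).PosSemidef) :
    (∀ o : E → Bool, ∀ v : V, lapP a b o F S v = lapM a b o F S v) ↔
    (∀ e : E, F e (a e) * S (a e) * (F e (a e))ᵀ
        = F e (b e) * S (b e) * (F e (b e))ᵀ) := by
  simp only [lapP_eq_lapM_iff_covCoboundary_eq_zero a b _ F fun v => (hS v).isHermitian,
    covCoboundary_eq_zero_iff, forall_const]

/-- For a connected graph and a covariance sheaf with invertible restriction maps,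
a PSD 0-cochain is in the equalizer of `L_C⁺` and `L_C⁻` (for every choice of
edge orientations) iff it is a global section, i.e. `Eq(L_C⁺, L_C⁻) = H⁰(G,C)`. -/
theorem lap_equalizer_eq_H0 [Fintype E] [DecidableEq V]
    (a b : E → V) (hloop : ∀ e, a e ≠ b e)
    (hconn : ∀ v w : V, Relation.ReflTransGen
      (fun x y => ∃ e, (a e = x ∧ b e = y) ∨ (a e = y ∧ b e = x)) v w)
    (F : E → V → Matrix (Fin d) (Fin d) ℝ)
    (hF : ∀ e v, IsUnit (F e v))
    (S : V → Matrix (Fin d) (Fin d) ℝ) (hS : ∀ v, (S v).PosSemidef) :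
    (∀ o : E → Bool, ∀ v : V, lapP a b o F S v = lapM a b o F S v) ↔
    (∀ e : E, F e (a e) * S (a e) * (F e (a e))ᵀ
        = F e (b e) * S (b e) * (F e (b e))ᵀ) :=
  lap_equalizer_eq_H0_general a b F S hS
end

section
/- Let (G, F) be a Gaussian sheaf with orthogonal restriction maps over a connected graph, and fix a vertex v and a Gaussian ϑ = (μ, Σ). There exists a global section ν with ν_v = ϑ if and only if for every cycle γ based at v the transport P^γ_{v→v} lies in the stabilizer of ϑ (i.e., P^γ_{v→v}(ϑ) = ϑ). -/
open Matrix

variable {V E : Type*} {d : ℕ}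

/-- One transport step across an edge `e` from `w` to `u` (recorded as `(e, w, u)`):
`(μ,Σ) ↦ (F_{u◁e}ᵀ F_{w◁e} μ, F_{u◁e}ᵀ F_{w◁e} Σ F_{w◁e}ᵀ F_{u◁e})`. -/
def transportStep (F : E → V → Matrix (Fin d) (Fin d) ℝ) (s : E × V × V)
    (p : (Fin d → ℝ) × Matrix (Fin d) (Fin d) ℝ) :
    (Fin d → ℝ) × Matrix (Fin d) (Fin d) ℝ :=
  ((((F s.1 s.2.2)ᵀ * F s.1 s.2.1)).mulVec p.1,
    ((F s.1 s.2.2)ᵀ * F s.1 s.2.1) * p.2 * ((F s.1 s.2.2)ᵀ * F s.1 s.2.1)ᵀ)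

/-- Transport along a path, composing the edge transport maps. -/
def transport (F : E → V → Matrix (Fin d) (Fin d) ℝ) (γ : List (E × V × V))
    (p : (Fin d → ℝ) × Matrix (Fin d) (Fin d) ℝ) :
    (Fin d → ℝ) × Matrix (Fin d) (Fin d) ℝ :=
  γ.foldl (fun q s => transportStep F s q) p

/-- `IsWalk a b v γ u`: the list of steps `γ` is a walk from `v` to `u` in the
graph with edge-endpoint maps `a`, `b`. -/
def IsWalk (a b : E → V) : V → List (E × V × V) → V → Prop
  | v, [], u => v = u
  | v, s :: rest, u =>
      s.2.1 = v ∧ ((a s.1 = s.2.1 ∧ b s.1 = s.2.2) ∨ (a s.1 = s.2.2 ∧ b s.1 = s.2.1)) ∧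
        IsWalk a b s.2.2 rest u


/-!
Orthogonality of the restriction maps makes the transport across an edge invertible, with
inverse the transport back across the same edge, and it turns the two edge conditions of a
section into the single equation "transport across `e` carries `ν_{a e}` to `ν_{b e}`".
Hence a global section is carried to itself along every walk, so cycle transports fix `ν_v`.
Conversely, fix a walk `γ_w` from `v` to each vertex `w` and put `ν_w := P^{γ_w}(ϑ)`. For an
edge `e`, transport along the cycle `γ_{a e}`, then `e`, then `γ_{b e}` backwards fixes `ϑ`;
undoing the last leg with `γ_{b e}` gives exactly the edge equation for `ν` at `e`.
-/

section Walks

variable {a b : E → V}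

def reverseWalk (γ : List (E × V × V)) : List (E × V × V) :=
  (γ.map fun s => (s.1, s.2.2, s.2.1)).reverse

theorem reverseWalk_cons (s : E × V × V) (γ : List (E × V × V)) :
    reverseWalk (s :: γ) = reverseWalk γ ++ [(s.1, s.2.2, s.2.1)] := by
  simp [reverseWalk]

theorem IsWalk.append {x y z : V} {γ γ' : List (E × V × V)}
    (h : IsWalk a b x γ y) (h' : IsWalk a b y γ' z) : IsWalk a b x (γ ++ γ') z := by
  induction γ generalizing x with
  | nil => exact (show x = y from h) ▸ h'
  | cons s rest ih => exact ⟨h.1, h.2.1, ih h.2.2⟩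

theorem IsWalk.reverse {x y : V} {γ : List (E × V × V)} (h : IsWalk a b x γ y) :
    IsWalk a b y (reverseWalk γ) x := by
  induction γ generalizing x with
  | nil => exact (show x = y from h).symm
  | cons s rest ih =>
    obtain ⟨rfl, hs, hrest⟩ := h
    rw [reverseWalk_cons]
    exact (ih hrest).append ⟨rfl, hs.symm, rfl⟩

theorem exists_isWalk_of_reflTransGen {x y : V}
    (h : Relation.ReflTransGen (fun x y => ∃ e, (a e = x ∧ b e = y) ∨ (a e = y ∧ b e = x)) x y) :
    ∃ γ, IsWalk a b x γ y := by
  induction h with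
  | refl => exact ⟨[], rfl⟩
  | tail _ hstep ih =>
    obtain ⟨γ, hγ⟩ := ih
    obtain ⟨e, he⟩ := hstep
    exact ⟨γ ++ [(e, _, _)], hγ.append ⟨rfl, he, rfl⟩⟩

end Walks

namespace Matrix

variable {n R : Type*} [Fintype n] [DecidableEq n] [CommRing R]

theorem transpose_mulVec_eq_iff {U : Matrix n n R} (hU : Uᵀ * U = 1)
    {x y : n → R} : Uᵀ *ᵥ x = y ↔ x = U *ᵥ y := by
  have hU' : U * Uᵀ = 1 := mul_eq_one_comm.mp hU
  constructor
  · rintro rfl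
    rw [mulVec_mulVec, hU', one_mulVec]
  · rintro rfl
    rw [mulVec_mulVec, hU, one_mulVec]

theorem transpose_mul_mul_eq_iff {U : Matrix n n R} (hU : Uᵀ * U = 1)
    {X Y : Matrix n n R} : Uᵀ * X * U = Y ↔ X = U * Y * Uᵀ := by
  have hU' : U * Uᵀ = 1 := mul_eq_one_comm.mp hU
  constructor
  · rintro rfl
    simp only [Matrix.mul_assoc, hU', Matrix.mul_one]
    rw [← Matrix.mul_assoc, hU', Matrix.one_mul]
  · rintro rfl
    simp only [Matrix.mul_assoc, hU, Matrix.mul_one]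
    rw [← Matrix.mul_assoc, hU, Matrix.one_mul]

end Matrix

section Transport

variable {F : E → V → Matrix (Fin d) (Fin d) ℝ}

theorem transport_cons (s : E × V × V) (γ : List (E × V × V))
    (p : (Fin d → ℝ) × Matrix (Fin d) (Fin d) ℝ) :
    transport F (s :: γ) p = transport F γ (transportStep F s p) := rfl

theorem transport_append (γ γ' : List (E × V × V))
    (p : (Fin d → ℝ) × Matrix (Fin d) (Fin d) ℝ) :
    transport F (γ ++ γ') p = transport F γ' (transport F γ p) :=
  List.foldl_append

theorem transportStep_eq_iff {e : E} {w u : V} (hu : (F e u)ᵀ * F e u = 1)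
    {p q : (Fin d → ℝ) × Matrix (Fin d) (Fin d) ℝ} :
    transportStep F (e, w, u) p = q ↔
      F e w *ᵥ p.1 = F e u *ᵥ q.1 ∧ F e w * p.2 * (F e w)ᵀ = F e u * q.2 * (F e u)ᵀ := by
  have hcov : ((F e u)ᵀ * F e w) * p.2 * ((F e u)ᵀ * F e w)ᵀ
      = (F e u)ᵀ * (F e w * p.2 * (F e w)ᵀ) * F e u := by
    simp only [transpose_mul, transpose_transpose, Matrix.mul_assoc]
  rw [transportStep, Prod.ext_iff, ← mulVec_mulVec, hcov, transpose_mulVec_eq_iff hu,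
    transpose_mul_mul_eq_iff hu]

theorem transportStep_swap {e : E} {w u : V} (hw : (F e w)ᵀ * F e w = 1)
    (hu : (F e u)ᵀ * F e u = 1) (p : (Fin d → ℝ) × Matrix (Fin d) (Fin d) ℝ) :
    transportStep F (e, u, w) (transportStep F (e, w, u) p) = p := by
  obtain ⟨hmean, hcov⟩ := (transportStep_eq_iff hu).mp rfl
  exact (transportStep_eq_iff hw).mpr ⟨hmean.symm, hcov.symm⟩

theorem transport_transport_reverseWalk (horth : ∀ e v, (F e v)ᵀ * F e v = 1)
    (γ : List (E × V × V)) (p : (Fin d → ℝ) × Matrix (Fin d) (Fin d) ℝ) :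
    transport F γ (transport F (reverseWalk γ) p) = p := by
  induction γ generalizing p with
  | nil => rfl
  | cons s rest ih =>
    obtain ⟨e, w, u⟩ := s
    rw [reverseWalk_cons, transport_append, transport_cons]
    exact (congrArg (transport F rest) (transportStep_swap (horth e u) (horth e w) _)).trans
      (ih p)

theorem transport_snd_posSemidef (γ : List (E × V × V))
    {p : (Fin d → ℝ) × Matrix (Fin d) (Fin d) ℝ} (hp : p.2.PosSemidef) :
    (transport F γ p).2.PosSemidef := by
  induction γ generalizing p with
  | nil => exact hp
  | cons s rest ih =>
    apply ih
    simpa [transportStep, conjTranspose_eq_transpose_of_trivial] using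
      hp.mul_mul_conjTranspose_same ((F s.1 s.2.2)ᵀ * F s.1 s.2.1)

theorem transport_eq_of_isWalk {a b : E → V} (horth : ∀ e v, (F e v)ᵀ * F e v = 1)
    {ν : V → (Fin d → ℝ) × Matrix (Fin d) (Fin d) ℝ}
    (hν : ∀ e, transportStep F (e, a e, b e) (ν (a e)) = ν (b e))
    {x y : V} {γ : List (E × V × V)} (hγ : IsWalk a b x γ y) :
    transport F γ (ν x) = ν y := by
  induction γ generalizing x with
  | nil =>
    obtain rfl : x = y := hγ
    rfl
  | cons s rest ih =>
    obtain ⟨e, w, u⟩ := s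
    dsimp only [IsWalk] at hγ
    obtain ⟨rfl, ⟨rfl, rfl⟩ | ⟨rfl, rfl⟩, hrest⟩ := hγ
    · rw [transport_cons, hν e]
      exact ih hrest
    · rw [transport_cons, ← hν e, transportStep_swap (horth e (a e)) (horth e (b e))]
      exact ih hrest

end Transport

/-- For a Gaussian sheaf with orthogonal restriction maps over a connected graph:
there is a global section `ν` with `ν_v = ϑ` iff every cycle transport based at
`v` stabilizes `ϑ`. -/
theorem section_exists_iff_cycle_stabilizes (a b : E → V)
    (hconn : ∀ v w : V, Relation.ReflTransGen
      (fun x y => ∃ e, (a e = x ∧ b e = y) ∨ (a e = y ∧ b e = x)) v w)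
    (F : E → V → Matrix (Fin d) (Fin d) ℝ)
    (horth : ∀ e v, (F e v)ᵀ * F e v = 1)
    (v : V) (ϑ : (Fin d → ℝ) × Matrix (Fin d) (Fin d) ℝ)
    (hϑ : ϑ.2.PosSemidef) :
    (∃ (μ : V → (Fin d → ℝ)) (S : V → Matrix (Fin d) (Fin d) ℝ),
        (∀ w, (S w).PosSemidef) ∧
        (∀ e, (F e (a e)).mulVec (μ (a e)) = (F e (b e)).mulVec (μ (b e))) ∧
        (∀ e, F e (a e) * S (a e) * (F e (a e))ᵀ
            = F e (b e) * S (b e) * (F e (b e))ᵀ) ∧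
        μ v = ϑ.1 ∧ S v = ϑ.2) ↔
    (∀ γ : List (E × V × V), IsWalk a b v γ v → transport F γ ϑ = ϑ) := by
  constructor
  · rintro ⟨μ, S, -, hμ, hS, hμv, hSv⟩ γ hγ
    have hν : ∀ e, transportStep F (e, a e, b e) (μ (a e), S (a e)) = (μ (b e), S (b e)) :=
      fun e => (transportStep_eq_iff (horth e (b e))).mpr ⟨hμ e, hS e⟩
    obtain rfl : (μ v, S v) = ϑ := Prod.ext hμv hSv
    exact transport_eq_of_isWalk horth (ν := fun w => (μ w, S w)) hν hγ
  · intro hcycle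
    choose γ hγ using fun w => exists_isWalk_of_reflTransGen (hconn v w)
    set ν := fun w => transport F (γ w) ϑ
    have hνv : ν v = ϑ := hcycle (γ v) (hγ v)
    have hν : ∀ e, transportStep F (e, a e, b e) (ν (a e)) = ν (b e) := by
      intro e
      have hloop := hcycle _ <| (hγ (a e)).append <|
        (show IsWalk a b (a e) [(e, a e, b e)] (b e) from ⟨rfl, Or.inl ⟨rfl, rfl⟩, rfl⟩).append
          (hγ (b e)).reverse
      rw [transport_append, transport_append] at hloop
      rw [← transport_transport_reverseWalk horth (γ (b e)) (transportStep F _ _)]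
      exact congrArg (transport F (γ (b e))) hloop
    have hsection := fun e => (transportStep_eq_iff (horth e (b e))).mp (hν e)
    exact ⟨fun w => (ν w).1, fun w => (ν w).2, fun w => transport_snd_posSemidef (γ w) hϑ,
      fun e => (hsection e).1, fun e => (hsection e).2, congrArg Prod.fst hνv,
      congrArg Prod.snd hνv⟩
end
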